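/- arXiv:1710.11343 — 6 statements merged into one kernel-verified Lean document; each statement's English description precedes it below -/
import Mathlib

section
/- Let X be a finite set and H : ℝ^X → ℝ^X an infinitesimal stochastic operator. Then for every t ≥ 0 the operator exp(tH) = ∑_{n=0}^∞ (tH)^n / n! is stochastic; in particular, t ↦ exp(tH) is a Markov semigroup. -/
/-!
The columns of `H` sum to zero exactly when `1ᵀ H = 0`; then `1ᵀ` kills every term `(t H)^k / k!`
with `k ≥ 1` of the exponential series, so `1ᵀ exp (t H) = 1ᵀ`. For positivity, `t H + c` is
entrywise nonnegative once the scalar `c` dominates the diagonal, so its exponential is nonnegative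
term by term, and `exp (t H) = e^{-c} exp (t H + c)` because `c` is central.
-/

open scoped BigOperators

noncomputable section

/-- The pushforward of vectors along a map of finite sets:
`(f_* v) b = ∑_{a : f a = b} v a`. -/
def pushforward {A B : Type} [Fintype A] [DecidableEq B] (f : A → B) :
    (A → ℝ) →ₗ[ℝ] (B → ℝ) where
  toFun v := fun b => ∑ a ∈ Finset.univ.filter (fun a => f a = b), v a
  map_add' u v := by
    funext b
    simp [Finset.sum_add_distrib]
  map_smul' c v := by
    funext b
    simp [Finset.mul_sum]

/-- The pullback of vectors along a map of finite sets: `f^* v = v ∘ f`. -/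
def pullback {A B : Type} (f : A → B) : (B → ℝ) →ₗ[ℝ] (A → ℝ) where
  toFun v := v ∘ f
  map_add' _ _ := rfl
  map_smul' _ _ := rfl

/-- A probability distribution on a finite set: nonnegative components summing to 1. -/
def IsProbDist {A : Type} [Fintype A] (v : A → ℝ) : Prop :=
  (∀ a, 0 ≤ v a) ∧ ∑ a, v a = 1

/-- A linear operator is stochastic if it maps probability distributions to
probability distributions. -/
def IsStochasticOp {A B : Type} [Fintype A] [Fintype B]
    (T : (A → ℝ) →ₗ[ℝ] (B → ℝ)) : Prop :=
  ∀ v, IsProbDist v → IsProbDist (T v)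

/-- An operator `H` is infinitesimal stochastic if its off-diagonal matrix entries
`H_{ij} = (H e_j) i` are nonnegative and each column sums to zero. -/
def IsInfinitesimalStochastic {A : Type} [Fintype A] [DecidableEq A]
    (H : (A → ℝ) →ₗ[ℝ] (A → ℝ)) : Prop :=
  (∀ i j, i ≠ j → 0 ≤ H (Pi.single j 1) i) ∧ ∀ j, ∑ i, H (Pi.single j 1) i = 0

/-- A stochastic section for `p : X → X'` is a stochastic operator
`s : ℝ^{X'} → ℝ^X` with `p_* ∘ s = 1`. -/
def IsStochasticSection {X X' : Type} [Fintype X] [Fintype X'] [DecidableEq X']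
    (p : X → X') (s : (X' → ℝ) →ₗ[ℝ] (X → ℝ)) : Prop :=
  IsStochasticOp s ∧ pushforward p ∘ₗ s = LinearMap.id

/-- A matrix is stochastic if it maps probability distributions to probability
distributions. -/
def IsStochasticMat {A B : Type} [Fintype A] [Fintype B] (T : Matrix B A ℝ) : Prop :=
  ∀ v, IsProbDist v → IsProbDist (T.mulVec v)

/-- A matrix is infinitesimal stochastic if its off-diagonal entries are nonnegative
and its columns sum to zero. -/
def IsInfStochMat {A : Type} [Fintype A] (H : Matrix A A ℝ) : Prop :=
  (∀ i j, i ≠ j → 0 ≤ H i j) ∧ ∀ j, ∑ i, H i j = 0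

/-- A Markov semigroup: a continuous one-parameter semigroup of stochastic matrices. -/
def IsMarkovSemigroup {A : Type} [Fintype A] [DecidableEq A] (U : ℝ → Matrix A A ℝ) : Prop :=
  (∀ t : ℝ, 0 ≤ t → IsStochasticMat (U t)) ∧ U 0 = 1 ∧
    (∀ s t : ℝ, 0 ≤ s → 0 ≤ t → U (s + t) = U s * U t) ∧
    ∀ v : A → ℝ, ContinuousOn (fun t => (U t).mulVec v) (Set.Ici 0)

/-- The (matrix of the) pushforward along `f`. -/
def pushMat {A B : Type} [DecidableEq B] (f : A → B) : Matrix B A ℝ :=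
  Matrix.of fun b a => if f a = b then 1 else 0

/-- A commuting square of maps that is a pullback: every compatible pair has a
unique common preimage. -/
def IsPullbackSquare {A B C D : Type} (f : A → B) (g : A → C) (h : B → D) (k : C → D) : Prop :=
  (∀ a, h (f a) = k (g a)) ∧ ∀ (b : B) (c : C), h b = k c → ∃! a, f a = b ∧ g a = c

/-- A commuting square of maps satisfying the universal property of a pushout. -/
def IsPushoutSquare {T X Y Z : Type} (o : T → X) (i' : T → Y) (j : X → Z) (k : Y → Z) : Prop :=
  (∀ t, j (o t) = k (i' t)) ∧
    ∀ (W : Type) (u : X → W) (u' : Y → W), (∀ t, u (o t) = u' (i' t)) →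
      ∃! w : Z → W, (∀ x, w (j x) = u x) ∧ ∀ y, w (k y) = u' y

/-- The black-boxing of an open Markov process `S → (X,H) ← T`: the set of
steady-state boundary data `(i^* v, I, o^* v, O)`. -/
def blackBox {S X T : Type} [Fintype S] [Fintype T] [DecidableEq X]
    (i : S → X) (o : T → X) (H : (X → ℝ) →ₗ[ℝ] (X → ℝ)) :
    Set ((S → ℝ) × (S → ℝ) × (T → ℝ) × (T → ℝ)) :=
  {w | ∃ (v : X → ℝ) (I : S → ℝ) (O : T → ℝ),
    H v + pushforward i I - pushforward o O = 0 ∧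
    w = (pullback i v, I, pullback o v, O)}

/-- The direct sum of two operators, under the canonical identification
`ℝ^{X ⊕ Y} ≃ ℝ^X ⊕ ℝ^Y`. -/
def dsum {A B : Type} (H : (A → ℝ) →ₗ[ℝ] (A → ℝ)) (G : (B → ℝ) →ₗ[ℝ] (B → ℝ)) :
    (A ⊕ B → ℝ) →ₗ[ℝ] (A ⊕ B → ℝ) :=
  (LinearEquiv.sumArrowLequivProdArrow A B ℝ ℝ).symm.toLinearMap ∘ₗ
    (H.prodMap G) ∘ₗ (LinearEquiv.sumArrowLequivProdArrow A B ℝ ℝ).toLinearMap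

open NormedSpace
open scoped Nat

namespace Matrix

variable {n : Type*} [Fintype n] [DecidableEq n]

section LinftyOpNorm

attribute [local instance] Matrix.linftyOpNormedRing Matrix.linftyOpNormedAlgebra

theorem exp_series_hasSum_exp' (A : Matrix n n ℝ) :
    HasSum (fun k => (k !⁻¹ : ℝ) • A ^ k) (exp A) :=
  NormedSpace.exp_series_hasSum_exp' A

theorem exp_continuous : Continuous (exp : Matrix n n ℝ → Matrix n n ℝ) :=
  NormedSpace.exp_continuous

end LinftyOpNorm

theorem exp_apply_nonneg_of_nonneg {A : Matrix n n ℝ} (hA : ∀ i j, 0 ≤ A i j) (i j : n) :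
    0 ≤ exp A i j :=
  (Pi.hasSum.1 (Pi.hasSum.1 (exp_series_hasSum_exp' A) i) j).nonneg fun k =>
    mul_nonneg (by positivity) (pow_apply_nonneg hA k i j)

theorem vecMul_exp_of_vecMul_eq_zero {A : Matrix n n ℝ} {v : n → ℝ} (h : v ᵥ* A = 0) :
    v ᵥ* exp A = v := by
  have hsum : HasSum (fun k => v ᵥ* ((k !⁻¹ : ℝ) • A ^ k)) (v ᵥ* exp A) :=
    (exp_series_hasSum_exp' A).map (vecMulBilin ℝ ℝ v)
      (continuous_const.matrix_vecMul continuous_id)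
  have hvanish : ∀ k ≠ 0, v ᵥ* ((k !⁻¹ : ℝ) • A ^ k) = 0 := by
    rintro (_ | k) hk
    · exact absurd rfl hk
    · rw [vecMul_smul, pow_succ', ← vecMul_vecMul, h, zero_vecMul, smul_zero]
  simpa using hsum.unique (hasSum_single 0 hvanish)


theorem exp_scalar (c : ℝ) : exp (scalar n c) = scalar n (Real.exp c) := by
  rw [scalar_apply, scalar_apply, exp_diagonal, Pi.exp_def, Real.exp_eq_exp_ℝ]

theorem exp_apply_nonneg_of_offDiag_nonneg {A : Matrix n n ℝ} (hA : ∀ i j, i ≠ j → 0 ≤ A i j)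
    (i j : n) : 0 ≤ exp A i j := by
  set c : ℝ := ∑ k, |A k k|
  have hshift : ∀ i j, 0 ≤ (A + scalar n c) i j := by
    intro i j
    rcases eq_or_ne i j with rfl | hij
    · have : |A i i| ≤ c :=
        Finset.single_le_sum (fun k _ => abs_nonneg (A k k)) (Finset.mem_univ i)
      simp only [add_apply, scalar_apply, diagonal_apply_eq]
      linarith [neg_abs_le (A i i)]
    · simpa [hij] using hA i j hij
  have hexp : exp A = exp (A + scalar n c) * scalar n (Real.exp (-c)) := by
    have hcomm : Commute (A + scalar n c) (scalar n (-c)) :=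
      (scalar_commute (-c) (Commute.all (-c)) _).symm
    rw [← exp_scalar, ← exp_add_of_commute _ _ hcomm, add_assoc, ← map_add, add_neg_cancel,
      map_zero, add_zero]
  rw [hexp, scalar_apply (Real.exp (-c)), mul_diagonal]
  exact mul_nonneg (exp_apply_nonneg_of_nonneg hshift i j) (Real.exp_nonneg _)

theorem sum_exp_apply_eq_one_of_sum_eq_zero {A : Matrix n n ℝ} (hA : ∀ j, ∑ i, A i j = 0)
    (j : n) : ∑ i, exp A i j = 1 := by
  have hones : (1 : n → ℝ) ᵥ* A = 0 := by
    ext j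
    simp [vecMul, dotProduct, hA]
  simpa [vecMul, dotProduct] using congr_fun (vecMul_exp_of_vecMul_eq_zero hones) j

end Matrix

theorem isStochasticMat_of_nonneg_of_sum_eq_one {A B : Type} [Fintype A] [Fintype B]
    {T : Matrix B A ℝ} (hnonneg : ∀ i j, 0 ≤ T i j) (hsum : ∀ j, ∑ i, T i j = 1) :
    IsStochasticMat T := by
  rintro v ⟨hv, hv1⟩
  refine ⟨fun i => Finset.sum_nonneg fun j _ => mul_nonneg (hnonneg i j) (hv j), ?_⟩
  calc ∑ i, T.mulVec v i = ∑ j, (∑ i, T i j) * v j := by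
        simp only [Matrix.mulVec, dotProduct, Finset.sum_mul]
        exact Finset.sum_comm
    _ = 1 := by simp [hsum, hv1]

theorem IsInfStochMat.smul {A : Type} [Fintype A] {H : Matrix A A ℝ} (hH : IsInfStochMat H)
    {t : ℝ} (ht : 0 ≤ t) : IsInfStochMat (t • H) :=
  ⟨fun i j hij => mul_nonneg ht (hH.1 i j hij), fun j => by simp [← Finset.mul_sum, hH.2 j]⟩

theorem IsInfStochMat.isStochasticMat_exp {A : Type} [Fintype A] [DecidableEq A]
    {H : Matrix A A ℝ} (hH : IsInfStochMat H) : IsStochasticMat (exp H) :=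
  isStochasticMat_of_nonneg_of_sum_eq_one (Matrix.exp_apply_nonneg_of_offDiag_nonneg hH.1)
    (Matrix.sum_exp_apply_eq_one_of_sum_eq_zero hH.2)

/-- If `H` is infinitesimal stochastic then `exp (t • H)` is stochastic
for all `t ≥ 0`; in particular `t ↦ exp (t • H)` is a Markov semigroup. -/
theorem exp_isStochastic_of_infStoch {X : Type} [Fintype X] [DecidableEq X]
    (H : Matrix X X ℝ) (hH : IsInfStochMat H) :
    (∀ t : ℝ, 0 ≤ t → IsStochasticMat (NormedSpace.exp (t • H))) ∧
      IsMarkovSemigroup (fun t => NormedSpace.exp (t • H)) := by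
  have hstoch : ∀ t : ℝ, 0 ≤ t → IsStochasticMat (NormedSpace.exp (t • H)) :=
    fun t ht => (hH.smul ht).isStochasticMat_exp
  refine ⟨hstoch, hstoch, by simp, fun s t _ _ => ?_, fun v => ?_⟩
  · simp only [add_smul]
    exact Matrix.exp_add_of_commute _ _ (((Commute.refl H).smul_left s).smul_right t)
  · exact ((Matrix.exp_continuous.comp (continuous_id.smul continuous_const)).matrix_mulVec
      continuous_const).continuousOn

end
end

section
/- Let X be a finite set and U(t) : ℝ^X → ℝ^X a Markov semigroup. Then there is a unique infinitesimal stochastic operator H : ℝ^X → ℝ^X with U(t) = exp(tH) for all t ≥ 0, and H is given by Hv = (d/dt U(t)v)|_{t=0} for all v ∈ ℝ^X. -/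
open scoped BigOperators

noncomputable section

/-! Let `V t = ∫₀ᵗ U`. The semigroup law gives `U h * V t₀ = V (h + t₀) - V h`, and `V t / t → 1`
as `t → 0⁺`, so `V t₀` is invertible for some small `t₀ > 0`. Solving for `U h` shows that `U` is
right-differentiable at `0`, with derivative `H = (U t₀ - 1) * (V t₀)⁻¹`, and then `U' = H * U` on
`[0, ∞)`, so `s ↦ exp ((t - s) • H) * U s` is constant on `[0, t]`: `U t = exp (t • H)`.
Nonnegativity of off-diagonal entries and conservation of column sums under `U t` pass to the
derivative `H` at `t = 0`, and `H` is unique as a one-sided derivative. -/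

open Set Filter Topology NormedSpace

theorem hasDerivWithinAt_intervalIntegral_Ici {E : Type*} [NormedAddCommGroup E]
    [NormedSpace ℝ E] [CompleteSpace E] {f : ℝ → E} {a b : ℝ} (hf : ContinuousOn f (Ici a))
    (hb : a ≤ b) : HasDerivWithinAt (fun t => ∫ s in a..t, f s) (f b) (Ici b) b := by
  have hmeas : StronglyMeasurableAtFilter f (𝓝[>] b) := by
    obtain ⟨s, hs, hmeas⟩ := hf.stronglyMeasurableAtFilter_nhdsWithin measurableSet_Ici b
    exact ⟨s, nhdsWithin_mono b (Ioi_subset_Ici hb) hs, hmeas⟩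
  exact intervalIntegral.integral_hasDerivWithinAt_right
    ((hf.mono Icc_subset_Ici_self).intervalIntegrable_of_Icc hb) hmeas
    ((hf b hb).mono (Ioi_subset_Ici hb))

theorem HasDerivWithinAt.nonneg_of_isMinOn {f : ℝ → ℝ} {f' a : ℝ}
    (hf : HasDerivWithinAt f f' (Ici a) a) (hmin : IsMinOn f (Ici a) a) : 0 ≤ f' := by
  have hone : (1 : ℝ) ∈ posTangentConeAt (Ici a) a :=
    mem_posTangentConeAt_of_segment_subset (by simp [segment_eq_Icc, Icc_subset_Ici_self])
  simpa using hmin.localize.hasFDerivWithinAt_nonneg hf.hasFDerivWithinAt hone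

section BanachAlgebra

variable {𝔸 : Type*} [NormedRing 𝔸] [NormedAlgebra ℝ 𝔸] {U : ℝ → 𝔸}

theorem hasDerivWithinAt_Ici_of_semigroup
    (hmul : ∀ s t, 0 ≤ s → 0 ≤ t → U (s + t) = U s * U t) {H : 𝔸}
    (hH : HasDerivWithinAt U H (Ici 0) 0) {t : ℝ} (ht : 0 ≤ t) :
    HasDerivWithinAt U (H * U t) (Ici t) t := by
  have hshift : HasDerivWithinAt (fun h => U (h + t)) (H * U t) (Ici 0) 0 :=
    (hH.mul_const (U t)).congr_of_mem (fun h hh => hmul h t hh ht) self_mem_Ici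
  have := hshift.scomp_of_eq t ((hasDerivWithinAt_id t (Ici t)).sub_const t)
    (fun s hs => mem_Ici.2 (sub_nonneg.2 hs)) (by simp)
  simpa [Function.comp_def] using this

variable [CompleteSpace 𝔸]

theorem exists_isUnit_intervalIntegral (hcont : ContinuousOn U (Ici 0)) (hU0 : IsUnit (U 0)) :
    ∃ t > 0, IsUnit (∫ s in 0..t, U s) := by
  have hslope : Tendsto (slope (fun t => ∫ s in 0..t, U s) 0) (𝓝[>] 0) (𝓝 (U 0)) := by
    simpa [hasDerivWithinAt_iff_tendsto_slope] using
      hasDerivWithinAt_intervalIntegral_Ici hcont le_rfl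
  obtain ⟨t, hunit, ht⟩ :=
    ((hslope.eventually (Units.isOpen.mem_nhds hU0)).and self_mem_nhdsWithin).exists
  have hV : (∫ s in 0..t, U s) = Units.mk0 t ht.ne' • slope (fun t => ∫ s in 0..t, U s) 0 t := by
    simp [slope_def_module, smul_smul, ht.ne']
  exact ⟨t, ht, hV ▸ (isUnit_smul_iff _ _).2 hunit⟩

theorem mul_intervalIntegral_of_semigroup
    (hmul : ∀ s t, 0 ≤ s → 0 ≤ t → U (s + t) = U s * U t) (hcont : ContinuousOn U (Ici 0))
    {h t : ℝ} (hh : 0 ≤ h) (ht : 0 ≤ t) :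
    U h * ∫ s in 0..t, U s = (∫ s in 0..h + t, U s) - ∫ s in 0..h, U s := by
  have hint : ∀ b, 0 ≤ b → IntervalIntegrable U MeasureTheory.volume 0 b := fun b hb =>
    (hcont.mono Icc_subset_Ici_self).intervalIntegrable_of_Icc hb
  calc U h * ∫ s in 0..t, U s = ∫ s in 0..t, U h * U s :=
        ((ContinuousLinearMap.mul ℝ 𝔸 (U h)).intervalIntegral_comp_comm (hint t ht)).symm
    _ = ∫ s in 0..t, U (h + s) :=
        intervalIntegral.integral_congr fun s hs => by
          rw [uIcc_of_le ht] at hs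
          exact (hmul h s hh hs.1).symm
    _ = ∫ s in h..h + t, U s := by simp [intervalIntegral.integral_comp_add_left U h]
    _ = (∫ s in 0..h + t, U s) - ∫ s in 0..h, U s :=
        (intervalIntegral.integral_interval_sub_left (hint _ (by positivity)) (hint h hh)).symm

theorem exists_hasDerivWithinAt_of_semigroup (hU0 : U 0 = 1)
    (hmul : ∀ s t, 0 ≤ s → 0 ≤ t → U (s + t) = U s * U t) (hcont : ContinuousOn U (Ici 0)) :
    ∃ H, HasDerivWithinAt U H (Ici 0) 0 := by
  obtain ⟨t₀, ht₀, w, hw⟩ := exists_isUnit_intervalIntegral hcont (by rw [hU0]; exact isUnit_one)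
  have hshift : HasDerivWithinAt (fun h => ∫ s in 0..h + t₀, U s) (U t₀) (Ici 0) 0 := by
    have := (hasDerivWithinAt_intervalIntegral_Ici hcont ht₀.le).scomp_of_eq 0
      ((hasDerivWithinAt_id 0 (Ici 0)).add_const t₀)
      (fun h hh => by simpa using le_add_of_nonneg_left (a := t₀) hh) (by simp)
    simpa [Function.comp_def] using this
  have hdiff := (hshift.fun_sub (hasDerivWithinAt_intervalIntegral_Ici hcont le_rfl)).mul_const
    (↑w⁻¹ : 𝔸)
  refine ⟨_, hdiff.congr_of_mem (fun h hh => ?_) self_mem_Ici⟩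
  rw [← mul_intervalIntegral_of_semigroup hmul hcont hh ht₀.le, ← hw, Units.mul_inv_cancel_right]

theorem eq_exp_smul_of_semigroup (hU0 : U 0 = 1)
    (hmul : ∀ s t, 0 ≤ s → 0 ≤ t → U (s + t) = U s * U t) (hcont : ContinuousOn U (Ici 0))
    {H : 𝔸} (hH : HasDerivWithinAt U H (Ici 0) 0) {t : ℝ} (ht : 0 ≤ t) :
    U t = exp (t • H) := by
  have hexp : ∀ s, HasDerivAt (fun s => exp ((t - s) • H)) (-(exp ((t - s) • H) * H)) s :=
    fun s => (hasDerivAt_exp_smul_const H (t - s)).comp_const_sub t s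
  have hconst := constant_of_has_deriv_right_zero (f := fun s => exp ((t - s) • H) * U s)
    (fun s hs => (hexp s).continuousAt.continuousWithinAt.mul
      ((hcont s hs.1).mono Icc_subset_Ici_self))
    (fun s hs => by
      simpa [mul_assoc] using
        (hexp s).hasDerivWithinAt.fun_mul (hasDerivWithinAt_Ici_of_semigroup hmul hH hs.1))
    t ⟨ht, le_rfl⟩
  simpa [hU0] using hconst

theorem hasDerivWithinAt_of_eq_exp_smul {H : 𝔸} (h : ∀ t, 0 ≤ t → U t = exp (t • H)) :
    HasDerivWithinAt U H (Ici 0) 0 := by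
  have hexp : HasDerivAt (fun t : ℝ => exp (t • H)) H 0 := by
    simpa using hasDerivAt_exp_smul_const H (0 : ℝ)
  exact hexp.hasDerivWithinAt.congr_of_mem h self_mem_Ici

end BanachAlgebra

section StochasticMatrix

open scoped Matrix

variable {A B : Type} [Fintype A]

theorem continuousOn_of_continuousOn_mulVec [DecidableEq A] {T : Type*} [TopologicalSpace T]
    {U : T → Matrix B A ℝ} {s : Set T} (hU : ∀ v, ContinuousOn (fun t => U t *ᵥ v) s) :
    ContinuousOn U s := by
  refine continuousOn_pi.2 fun i => continuousOn_pi.2 fun j => ?_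
  have := (continuous_apply i).comp_continuousOn (hU (Pi.single j 1))
  simpa [Function.comp_def, Matrix.mulVec_single] using this

variable [Fintype B]

theorem HasDerivWithinAt.mulVec_const {U : ℝ → Matrix B A ℝ} {H : Matrix B A ℝ} {s : Set ℝ}
    {x : ℝ} (hU : HasDerivWithinAt U H s x) (v : A → ℝ) :
    HasDerivWithinAt (fun t => U t *ᵥ v) (H *ᵥ v) s x := by
  open scoped Matrix.Norms.Operator in
  exact (LinearMap.toContinuousLinearMap ((Matrix.mulVecBilin ℝ ℝ).flip v)).hasFDerivAt
    |>.comp_hasDerivWithinAt x hU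

variable [DecidableEq A]

theorem isProbDist_single (j : A) : IsProbDist (Pi.single j (1 : ℝ)) :=
  ⟨fun a => by by_cases h : a = j <;> simp [h], by simp⟩

theorem IsStochasticMat.apply_nonneg {M : Matrix B A ℝ} (hM : IsStochasticMat M) (i : B)
    (j : A) : 0 ≤ M i j := by
  simpa [Matrix.mulVec_single] using (hM _ (isProbDist_single j)).1 i

theorem IsStochasticMat.sum_apply_eq_one {M : Matrix B A ℝ} (hM : IsStochasticMat M) (j : A) :
    ∑ i, M i j = 1 := by
  simpa [Matrix.mulVec_single] using (hM _ (isProbDist_single j)).2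

end StochasticMatrix

theorem isInfStochMat_of_hasDerivWithinAt {X : Type} [Fintype X] [DecidableEq X]
    {U : ℝ → Matrix X X ℝ} {H : Matrix X X ℝ}
    (hstoch : ∀ t, 0 ≤ t → IsStochasticMat (U t)) (hU0 : U 0 = 1)
    (hH : HasDerivWithinAt U H (Ici 0) 0) : IsInfStochMat H := by
  have hentry : ∀ i j, HasDerivWithinAt (fun t => U t i j) (H i j) (Ici 0) 0 := fun i j => by
    simpa [Matrix.mulVec_single] using hasDerivWithinAt_pi.1 (hH.mulVec_const (Pi.single j 1)) i
  refine ⟨fun i j hij => (hentry i j).nonneg_of_isMinOn fun t ht => ?_, fun j => ?_⟩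
  · simpa [hU0, Matrix.one_apply_ne hij] using (hstoch t ht).apply_nonneg i j
  · have hsum := HasDerivWithinAt.fun_sum (u := Finset.univ) fun i _ => hentry i j
    have hconst : HasDerivWithinAt (fun t => ∑ i, U t i j) 0 (Ici 0) 0 :=
      (hasDerivWithinAt_const 0 (Ici 0) (1 : ℝ)).congr_of_mem
        (fun t ht => (hstoch t ht).sum_apply_eq_one j) self_mem_Ici
    exact (uniqueDiffWithinAt_Ici 0).eq_deriv _ hsum hconst

/-- Every Markov semigroup `U` is of the form `U t = exp (t • H)` for a
unique infinitesimal stochastic `H`, and this `H` is the derivative of `U` at `t = 0`. -/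
theorem markovSemigroup_generator {X : Type} [Fintype X] [DecidableEq X]
    (U : ℝ → Matrix X X ℝ) (hU : IsMarkovSemigroup U) :
    (∃! H : Matrix X X ℝ, IsInfStochMat H ∧
        ∀ t : ℝ, 0 ≤ t → U t = NormedSpace.exp (t • H)) ∧
      ∀ H : Matrix X X ℝ,
        (IsInfStochMat H ∧ ∀ t : ℝ, 0 ≤ t → U t = NormedSpace.exp (t • H)) →
          ∀ v : X → ℝ,
            HasDerivWithinAt (fun t => (U t).mulVec v) (H.mulVec v) (Set.Ici 0) 0 := by
  obtain ⟨hstoch, hU0, hmul, hcontv⟩ := hU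
  have hcont : ContinuousOn U (Ici 0) := continuousOn_of_continuousOn_mulVec hcontv
  -- Matrices carry no norm instance; the Banach-algebra lemmas are applied with the `L∞`
  -- operator norm, whose topology is definitionally the product topology.
  open scoped Matrix.Norms.Operator in
  obtain ⟨H, hH⟩ := exists_hasDerivWithinAt_of_semigroup hU0 hmul hcont
  have hexp : ∀ t : ℝ, 0 ≤ t → U t = exp (t • H) := by
    open scoped Matrix.Norms.Operator in
    exact fun t ht => eq_exp_smul_of_semigroup hU0 hmul hcont hH ht
  have hderiv : ∀ H' : Matrix X X ℝ, (∀ t : ℝ, 0 ≤ t → U t = exp (t • H')) →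
      HasDerivWithinAt U H' (Ici 0) 0 := by
    open scoped Matrix.Norms.Operator in
    exact fun H' hH' => hasDerivWithinAt_of_eq_exp_smul hH'
  refine ⟨⟨H, ⟨isInfStochMat_of_hasDerivWithinAt hstoch hU0 hH, hexp⟩, fun H' hH' => ?_⟩,
    fun H' hH' v => (hderiv H' hH'.2).mulVec_const v⟩
  exact (uniqueDiffWithinAt_Ici 0).eq_deriv _ (hderiv H' hH'.2) hH

end
end

section
/- Let p : X → X' be a function between finite sets that admits a stochastic section s : ℝ^{X'} → ℝ^X, and let H : ℝ^X → ℝ^X be an infinitesimal stochastic operator. Then H' = p_* H s : ℝ^{X'} → ℝ^{X'} is also infinitesimal stochastic. -/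
open scoped BigOperators

noncomputable section

/-!
The column of `p_* H s` at `j` is `p_* (H w)` for `w = s e_j`, a probability distribution which,
since `p_* w = e_j`, is supported on the fibre `p⁻¹(j)`. Its entries sum to zero because `p_*`
preserves total mass and `H` annihilates it. An entry at `i ≠ j` is a sum of values `(H w) x` at
points `x` outside the support of `w`, where only the nonnegative off-diagonal entries of `H`
contribute.
-/

theorem LinearMap.apply_eq_sum_mul_single_apply {R ι κ : Type*} [CommSemiring R] [Fintype ι]
    [DecidableEq ι] (f : (ι → R) →ₗ[R] (κ → R)) (v : ι → R) (k : κ) :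
    f v k = ∑ i, v i * f (Pi.single i 1) k := by
  conv_lhs => rw [pi_eq_sum_univ' v, map_sum]
  simp only [map_smul, Finset.sum_apply, Pi.smul_apply, smul_eq_mul]

theorem pushforward_apply {A B : Type} [Fintype A] [DecidableEq B] (f : A → B) (v : A → ℝ)
    (b : B) : pushforward f v b = ∑ a ∈ Finset.univ.filter (fun a => f a = b), v a :=
  rfl

theorem sum_pushforward {A B : Type} [Fintype A] [Fintype B] [DecidableEq B] (f : A → B)
    (v : A → ℝ) : ∑ b, pushforward f v b = ∑ a, v a :=
  Finset.sum_fiberwise _ f v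

theorem eq_zero_of_pushforward_apply_eq_zero {A B : Type} [Fintype A] [DecidableEq B]
    (f : A → B) {v : A → ℝ} (hv : ∀ a, 0 ≤ v a) {a : A} (h : pushforward f v (f a) = 0) :
    v a = 0 :=
  (Finset.sum_eq_zero_iff_of_nonneg fun a _ => hv a).1 h a (by simp)

theorem isProbDist_single_s5 {A : Type} [Fintype A] [DecidableEq A] (a : A) :
    IsProbDist (Pi.single a 1 : A → ℝ) :=
  ⟨fun b => by rw [Pi.single_apply]; positivity, by simp⟩

namespace IsInfinitesimalStochastic

variable {A : Type} [Fintype A] [DecidableEq A] {H : (A → ℝ) →ₗ[ℝ] (A → ℝ)}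

theorem sum_apply_eq_zero (hH : IsInfinitesimalStochastic H) (v : A → ℝ) :
    ∑ x, H v x = 0 := by
  simp only [H.apply_eq_sum_mul_single_apply v]
  rw [Finset.sum_comm]
  simp [← Finset.mul_sum, hH.2]

theorem apply_nonneg_of_eq_zero (hH : IsInfinitesimalStochastic H) {v : A → ℝ}
    (hv : ∀ k, 0 ≤ v k) {x : A} (hx : v x = 0) : 0 ≤ H v x := by
  rw [H.apply_eq_sum_mul_single_apply]
  refine Finset.sum_nonneg fun k _ => ?_
  rcases eq_or_ne x k with rfl | hxk
  · simp [hx]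
  · exact mul_nonneg (hv k) (hH.1 x k hxk)

end IsInfinitesimalStochastic

namespace IsStochasticSection

variable {X X' : Type} [Fintype X] [Fintype X'] [DecidableEq X'] {p : X → X'}
  {s : (X' → ℝ) →ₗ[ℝ] (X → ℝ)}

theorem pushforward_apply_self (hs : IsStochasticSection p s) (v : X' → ℝ) :
    pushforward p (s v) = v :=
  LinearMap.congr_fun hs.2 v

theorem apply_single_nonneg (hs : IsStochasticSection p s) (j : X') (x : X) :
    0 ≤ s (Pi.single j 1) x :=
  (hs.1 _ (isProbDist_single_s5 j)).1 x

theorem apply_single_eq_zero (hs : IsStochasticSection p s) {j : X'} {x : X} (hx : p x ≠ j) :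
    s (Pi.single j 1) x = 0 :=
  eq_zero_of_pushforward_apply_eq_zero p (hs.apply_single_nonneg j)
    (by simp [hs.pushforward_apply_self, hx])

end IsStochasticSection

/-- If `p : X → X'` admits a stochastic section `s` and `H` is
infinitesimal stochastic, then `H' = p_* H s` is infinitesimal stochastic. -/
theorem pushforward_comp_section_infStoch {X X' : Type} [Fintype X] [Fintype X']
    [DecidableEq X] [DecidableEq X'] (p : X → X')
    (s : (X' → ℝ) →ₗ[ℝ] (X → ℝ)) (hs : IsStochasticSection p s)
    (H : (X → ℝ) →ₗ[ℝ] (X → ℝ)) (hH : IsInfinitesimalStochastic H) :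
    IsInfinitesimalStochastic (pushforward p ∘ₗ H ∘ₗ s) := by
  refine ⟨fun i j hij => ?_, fun j => ?_⟩
  · rw [LinearMap.comp_apply, LinearMap.comp_apply, pushforward_apply]
    refine Finset.sum_nonneg fun x hx => ?_
    have hpx : p x ≠ j := (Finset.mem_filter.1 hx).2 ▸ hij
    exact hH.apply_nonneg_of_eq_zero (hs.apply_single_nonneg j) (hs.apply_single_eq_zero hpx)
  · simp only [LinearMap.comp_apply, sum_pushforward, hH.sum_apply_eq_zero]

end
end

section
/- Let p : X → X' be a surjection of finite sets and let H be an infinitesimal stochastic operator on ℝ^X. Then the following are equivalent: (i) H is lumpable with respect to p (i.e., p_* H s is independent of the choice of stochastic section s for p); (ii) there exists a linear operator H' : ℝ^{X'} → ℝ^{X'} such that p_* H = H' p_*; (iii) p_* H e_j = p_* H e_{j'} for all j, j' ∈ X with p(j) = p(j'), where e_j denotes the standard basis vector of ℝ^X at j. -/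
/-!
A linear map on `ℝ^X` factors through `p_*` exactly when it takes the same value on `e_j` and
`e_{j'}` for `p j = p j'`. If `p_* H = H' p_*` then `p_* H s = H' p_* s = H'` for every section
`s`. Conversely, any two points of a fibre are the images of the fibre's basis vector under the
deterministic stochastic sections `τ_*` coming from set-theoretic sections `τ` of `p`.
-/

open scoped BigOperators

noncomputable section

theorem linearMap_ext_single {A M : Type} [Fintype A] [DecidableEq A] [AddCommGroup M]
    [Module ℝ M] {L L' : (A → ℝ) →ₗ[ℝ] M} (h : ∀ a, L (Pi.single a 1) = L' (Pi.single a 1)) :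
    L = L' :=
  (Pi.basisFun ℝ A).ext fun a => by simpa using h a

theorem pushforward_single {A B : Type} [Fintype A] [DecidableEq A] [DecidableEq B]
    (f : A → B) (a : A) : pushforward f (Pi.single a 1) = Pi.single (f a) 1 := by
  funext b
  simp [pushforward, Pi.single_apply, eq_comm]

theorem pushforward_comp {A B C : Type} [Fintype A] [Fintype B] [DecidableEq A] [DecidableEq B]
    [DecidableEq C] (g : B → C) (f : A → B) :
    pushforward g ∘ₗ pushforward f = pushforward (g ∘ f) :=
  linearMap_ext_single fun a => by simp [pushforward_single]

theorem pushforward_id {A : Type} [Fintype A] [DecidableEq A] :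
    pushforward (id : A → A) = LinearMap.id :=
  linearMap_ext_single fun a => by simp [pushforward_single]

theorem isStochasticOp_pushforward {A B : Type} [Fintype A] [Fintype B] [DecidableEq B]
    (f : A → B) : IsStochasticOp (pushforward f) := fun v hv =>
  ⟨fun _ => Finset.sum_nonneg fun a _ => hv.1 a, (Finset.sum_fiberwise _ f v).trans hv.2⟩

theorem isStochasticSection_pushforward {X X' : Type} [Fintype X] [Fintype X'] [DecidableEq X]
    [DecidableEq X'] {p : X → X'} {τ : X' → X} (hτ : p ∘ τ = id) :
    IsStochasticSection p (pushforward τ) :=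
  ⟨isStochasticOp_pushforward τ, by rw [pushforward_comp, hτ, pushforward_id]⟩

theorem Function.Surjective.exists_section_apply_eq {X X' : Type} [DecidableEq X']
    {p : X → X'} (hp : Function.Surjective p) (x : X) : ∃ τ : X' → X, p ∘ τ = id ∧ τ (p x) = x := by
  obtain ⟨σ, hσ⟩ := hp.hasRightInverse
  refine ⟨Function.update σ (p x) x, funext fun y => ?_, Function.update_self _ _ _⟩
  by_cases hy : y = p x
  · subst hy; simp
  · simp [Function.update_of_ne hy, hσ y]

theorem exists_eq_comp_pushforward_iff {X X' M : Type} [Fintype X] [Fintype X'] [DecidableEq X]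
    [DecidableEq X'] [AddCommGroup M] [Module ℝ M] {p : X → X'} (hp : Function.Surjective p)
    (L : (X → ℝ) →ₗ[ℝ] M) :
    (∃ L' : (X' → ℝ) →ₗ[ℝ] M, L = L' ∘ₗ pushforward p) ↔
      ∀ j j' : X, p j = p j' → L (Pi.single j 1) = L (Pi.single j' 1) := by
  constructor
  · rintro ⟨L', rfl⟩ j j' hjj'
    simp [pushforward_single, hjj']
  · intro hL
    obtain ⟨σ, hσ⟩ := hp.hasRightInverse
    refine ⟨L ∘ₗ pushforward σ, linearMap_ext_single fun j => ?_⟩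
    simpa [pushforward_single] using hL j (σ (p j)) (hσ (p j)).symm

theorem comp_eq_of_isStochasticSection {X X' M : Type} [Fintype X] [Fintype X'] [DecidableEq X']
    [AddCommGroup M] [Module ℝ M] {p : X → X'} {L : (X → ℝ) →ₗ[ℝ] M}
    {L' : (X' → ℝ) →ₗ[ℝ] M} (hL : L = L' ∘ₗ pushforward p) {s : (X' → ℝ) →ₗ[ℝ] (X → ℝ)}
    (hs : IsStochasticSection p s) : L ∘ₗ s = L' := by
  rw [hL, LinearMap.comp_assoc, hs.2, LinearMap.comp_id]

theorem apply_single_eq_of_comp_section_eq {X X' M : Type} [Fintype X] [Fintype X']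
    [DecidableEq X] [DecidableEq X'] [AddCommGroup M] [Module ℝ M] {p : X → X'}
    (hp : Function.Surjective p) {L : (X → ℝ) →ₗ[ℝ] M}
    (hL : ∀ s s', IsStochasticSection p s → IsStochasticSection p s' → L ∘ₗ s = L ∘ₗ s')
    {j j' : X} (hjj' : p j = p j') : L (Pi.single j 1) = L (Pi.single j' 1) := by
  obtain ⟨τ, hτ, hτj⟩ := hp.exists_section_apply_eq j
  obtain ⟨τ', hτ', hτ'j'⟩ := hp.exists_section_apply_eq j'
  have h := LinearMap.congr_fun
    (hL _ _ (isStochasticSection_pushforward hτ) (isStochasticSection_pushforward hτ'))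
    (Pi.single (p j) 1)
  rwa [LinearMap.comp_apply, LinearMap.comp_apply, pushforward_single, pushforward_single, hτj,
    hjj', hτ'j'] at h

theorem lumpability_iff_general {X X' : Type} [Fintype X] [Fintype X']
    [DecidableEq X] [DecidableEq X'] (p : X → X') (hp : Function.Surjective p)
    (H : (X → ℝ) →ₗ[ℝ] (X → ℝ)) :
    ((∀ s s' : (X' → ℝ) →ₗ[ℝ] (X → ℝ), IsStochasticSection p s → IsStochasticSection p s' →
        pushforward p ∘ₗ H ∘ₗ s = pushforward p ∘ₗ H ∘ₗ s') ↔
      ∃ H' : (X' → ℝ) →ₗ[ℝ] (X' → ℝ), pushforward p ∘ₗ H = H' ∘ₗ pushforward p) ∧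
    ((∃ H' : (X' → ℝ) →ₗ[ℝ] (X' → ℝ), pushforward p ∘ₗ H = H' ∘ₗ pushforward p) ↔
      ∀ j j' : X, p j = p j' →
        pushforward p (H (Pi.single j 1)) = pushforward p (H (Pi.single j' 1))) := by
  have factor_iff := exists_eq_comp_pushforward_iff hp (pushforward p ∘ₗ H)
  refine ⟨⟨fun lumpable => factor_iff.2 fun j j' hjj' => ?_, ?_⟩, factor_iff⟩
  · exact apply_single_eq_of_comp_section_eq hp lumpable hjj'
  · rintro ⟨H', hH'⟩ s s' hs hs'
    rw [← LinearMap.comp_assoc, ← LinearMap.comp_assoc, comp_eq_of_isStochasticSection hH' hs,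
      comp_eq_of_isStochasticSection hH' hs']

/-- For a surjection `p : X → X'` and an infinitesimal stochastic `H` on
`ℝ^X`, the following are equivalent: (i) `p_* H s` is independent of the stochastic
section `s` (lumpability); (ii) there is `H'` with `p_* H = H' p_*`;
(iii) `p_* H e_j = p_* H e_{j'}` whenever `p j = p j'`. -/
theorem lumpability_iff {X X' : Type} [Fintype X] [Fintype X']
    [DecidableEq X] [DecidableEq X'] (p : X → X') (hp : Function.Surjective p)
    (H : (X → ℝ) →ₗ[ℝ] (X → ℝ)) (hH : IsInfinitesimalStochastic H) :
    ((∀ s s' : (X' → ℝ) →ₗ[ℝ] (X → ℝ), IsStochasticSection p s → IsStochasticSection p s' →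
        pushforward p ∘ₗ H ∘ₗ s = pushforward p ∘ₗ H ∘ₗ s') ↔
      ∃ H' : (X' → ℝ) →ₗ[ℝ] (X' → ℝ), pushforward p ∘ₗ H = H' ∘ₗ pushforward p) ∧
    ((∃ H' : (X' → ℝ) →ₗ[ℝ] (X' → ℝ), pushforward p ∘ₗ H = H' ∘ₗ pushforward p) ↔
      ∀ j j' : X, p j = p j' →
        pushforward p (H (Pi.single j 1)) = pushforward p (H (Pi.single j' 1))) :=
  lumpability_iff_general p hp H

end
end

section
/- The black-boxing of an open Markov process S →^i (X, H) ←^o T is a linear subspace of ℝ^S ⊕ ℝ^S ⊕ ℝ^T ⊕ ℝ^T. -/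
open scoped BigOperators

noncomputable section

/-!
The black-boxing is the image, under the linear map `(v, I, O) ↦ (i^* v, I, o^* v, O)`, of the
kernel of the linear map `(v, I, O) ↦ H v + i_* I - o_* O`.
-/

section BlackBoxSubmodule

variable {S X T : Type} [Fintype S] [Fintype T] [DecidableEq X]
  (i : S → X) (o : T → X) (H : (X → ℝ) →ₗ[ℝ] (X → ℝ))

def steadyStateDefect : ((X → ℝ) × (S → ℝ) × (T → ℝ)) →ₗ[ℝ] (X → ℝ) :=
  H ∘ₗ LinearMap.fst ℝ _ _ +
    pushforward i ∘ₗ LinearMap.fst ℝ _ _ ∘ₗ LinearMap.snd ℝ _ _ -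
    pushforward o ∘ₗ LinearMap.snd ℝ _ _ ∘ₗ LinearMap.snd ℝ _ _

def boundaryData :
    ((X → ℝ) × (S → ℝ) × (T → ℝ)) →ₗ[ℝ] (S → ℝ) × (S → ℝ) × (T → ℝ) × (T → ℝ) :=
  (pullback i ∘ₗ LinearMap.fst ℝ _ _).prod <|
    (LinearMap.fst ℝ _ _ ∘ₗ LinearMap.snd ℝ _ _).prod <|
      (pullback o ∘ₗ LinearMap.fst ℝ _ _).prod (LinearMap.snd ℝ _ _ ∘ₗ LinearMap.snd ℝ _ _)

def blackBoxSubmodule : Submodule ℝ ((S → ℝ) × (S → ℝ) × (T → ℝ) × (T → ℝ)) :=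
  (LinearMap.ker (steadyStateDefect i o H)).map (boundaryData i o)

theorem coe_blackBoxSubmodule :
    (blackBoxSubmodule i o H : Set ((S → ℝ) × (S → ℝ) × (T → ℝ) × (T → ℝ))) =
      blackBox i o H := by
  ext w
  constructor
  · rintro ⟨⟨v, I, O⟩, steady, rfl⟩
    exact ⟨v, I, O, steady, rfl⟩
  · rintro ⟨v, I, O, steady, rfl⟩
    exact ⟨(v, I, O), steady, rfl⟩

end BlackBoxSubmodule

theorem blackBox_isLinearSubspace_general {S X T : Type}
    [Fintype S] [Fintype T] [DecidableEq X]
    (i : S → X) (o : T → X)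
    (H : (X → ℝ) →ₗ[ℝ] (X → ℝ)) :
    ∃ W : Submodule ℝ ((S → ℝ) × (S → ℝ) × (T → ℝ) × (T → ℝ)),
      (W : Set ((S → ℝ) × (S → ℝ) × (T → ℝ) × (T → ℝ))) = blackBox i o H :=
  ⟨blackBoxSubmodule i o H, coe_blackBoxSubmodule i o H⟩

/-- The black-boxing of an open Markov process is a linear subspace of
`ℝ^S ⊕ ℝ^S ⊕ ℝ^T ⊕ ℝ^T`. -/
theorem blackBox_isLinearSubspace {S X T : Type}
    [Fintype S] [Fintype X] [Fintype T] [DecidableEq X]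
    (i : S → X) (o : T → X) (hi : Function.Injective i) (ho : Function.Injective o)
    (H : (X → ℝ) →ₗ[ℝ] (X → ℝ)) (hH : IsInfinitesimalStochastic H) :
    ∃ W : Submodule ℝ ((S → ℝ) × (S → ℝ) × (T → ℝ) × (T → ℝ)),
      (W : Set ((S → ℝ) × (S → ℝ) × (T → ℝ) × (T → ℝ))) = blackBox i o H :=
  blackBox_isLinearSubspace_general i o H

end
end

section
/- Let S →^i (X, H) ←^o T and T →^{i'} (Y, G) ←^{o'} U be composable open Markov processes, and let j : X → Z, k : Y → Z exhibit Z as a pushout of o : T → X and i' : T → Y. Suppose v ∈ ℝ^X, I ∈ ℝ^S, O ∈ ℝ^T satisfy H(v) + i_*(I) − o_*(O) = 0, and v' ∈ ℝ^Y, O' ∈ ℝ^U satisfy G(v') + i'_*(O) − o'_*(O') = 0, with o^*(v) = i'^*(v'). Then there exists w ∈ ℝ^Z with j^*(w) = v, k^*(w) = v', and (H ⊙ G)(w) + (j∘i)_*(I) − (k∘o')_*(O') = 0, where H ⊙ G = j_* H j^* + k_* G k^*. -/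
open scoped BigOperators

noncomputable section

/-!
Glue `v` and `v'` along the pushout into `w`. Since `j ∘ o = k ∘ i'`, the outflow `O` pushed
forward from `X` is the inflow `O` pushed forward from `Y`, so after pushing both steady-state
equations forward to `Z` and adding them the boundary terms on `T` cancel, leaving the steady-state
equation of the composite.
-/

theorem pushforward_pushforward {A B C : Type} [Fintype A] [Fintype B] [DecidableEq B]
    [DecidableEq C] (f : B → C) (g : A → B) (v : A → ℝ) :
    pushforward f (pushforward g v) = pushforward (f ∘ g) v := by
  funext c
  simp only [pushforward, LinearMap.coe_mk, AddHom.coe_mk, Function.comp_apply]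
  rw [← Finset.sum_fiberwise_of_maps_to (s := Finset.univ.filter fun a => f (g a) = c)
    (t := Finset.univ.filter fun b => f b = c) (g := g) (by simp)]
  refine Finset.sum_congr rfl fun b hb => Finset.sum_congr ?_ fun _ _ => rfl
  ext a
  simp only [Finset.mem_filter, Finset.mem_univ, true_and] at hb ⊢
  exact ⟨fun h => ⟨h ▸ hb, h⟩, And.right⟩

theorem IsPushoutSquare.exists_pullback_eq {T X Y Z : Type} {o : T → X} {i' : T → Y}
    {j : X → Z} {k : Y → Z} (hpo : IsPushoutSquare o i' j k) {v : X → ℝ} {v' : Y → ℝ}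
    (hagree : pullback o v = pullback i' v') :
    ∃ w : Z → ℝ, pullback j w = v ∧ pullback k w = v' := by
  obtain ⟨w, ⟨hwj, hwk⟩, -⟩ := hpo.2 ℝ v v' (congrFun hagree)
  exact ⟨w, funext hwj, funext hwk⟩

theorem composite_apply_add_boundary_eq {S X T Y U Z : Type}
    [Fintype S] [Fintype X] [Fintype T] [Fintype Y] [Fintype U]
    [DecidableEq X] [DecidableEq Y] [DecidableEq Z]
    (i : S → X) (o : T → X) (H : (X → ℝ) →ₗ[ℝ] (X → ℝ))
    (i' : T → Y) (o' : U → Y) (G : (Y → ℝ) →ₗ[ℝ] (Y → ℝ))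
    (j : X → Z) (k : Y → Z) (hcomm : j ∘ o = k ∘ i')
    (w : Z → ℝ) (I : S → ℝ) (O : T → ℝ) (O' : U → ℝ) :
    (pushforward j ∘ₗ H ∘ₗ pullback j + pushforward k ∘ₗ G ∘ₗ pullback k) w
        + pushforward (j ∘ i) I - pushforward (k ∘ o') O' =
      pushforward j (H (pullback j w) + pushforward i I - pushforward o O)
        + pushforward k (G (pullback k w) + pushforward i' O - pushforward o' O') := by
  have hcancel : pushforward j (pushforward o O) = pushforward k (pushforward i' O) := by
    rw [pushforward_pushforward, pushforward_pushforward, hcomm]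
  simp only [map_add, map_sub, LinearMap.add_apply, LinearMap.comp_apply, hcancel,
    pushforward_pushforward]
  abel

theorem composite_steady_state_exists_general
    {S X T Y U Z : Type}
    [Fintype S] [Fintype X] [Fintype T] [Fintype Y] [Fintype U]
    [DecidableEq X] [DecidableEq Y] [DecidableEq Z]
    (i : S → X) (o : T → X)
    (H : (X → ℝ) →ₗ[ℝ] (X → ℝ))
    (i' : T → Y) (o' : U → Y)
    (G : (Y → ℝ) →ₗ[ℝ] (Y → ℝ))
    (j : X → Z) (k : Y → Z) (hpo : IsPushoutSquare o i' j k)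
    (v : X → ℝ) (I : S → ℝ) (O : T → ℝ) (v' : Y → ℝ) (O' : U → ℝ)
    (hv : H v + pushforward i I - pushforward o O = 0)
    (hv' : G v' + pushforward i' O - pushforward o' O' = 0)
    (hagree : pullback o v = pullback i' v') :
    ∃ w : Z → ℝ, pullback j w = v ∧ pullback k w = v' ∧
      (pushforward j ∘ₗ H ∘ₗ pullback j + pushforward k ∘ₗ G ∘ₗ pullback k) w
          + pushforward (j ∘ i) I - pushforward (k ∘ o') O' = 0 := by
  obtain ⟨w, hwv, hwv'⟩ := hpo.exists_pullback_eq hagree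
  refine ⟨w, hwv, hwv', ?_⟩
  rw [composite_apply_add_boundary_eq i o H i' o' G j k (funext hpo.1), hwv, hwv', hv, hv',
    map_zero, map_zero, add_zero]

/-- Compatible steady states of two composable open Markov processes
glue to a steady state of the composite. -/
theorem composite_steady_state_exists
    {S X T Y U Z : Type}
    [Fintype S] [Fintype X] [Fintype T] [Fintype Y] [Fintype U]
    [DecidableEq X] [DecidableEq Y] [DecidableEq Z]
    (i : S → X) (o : T → X) (hi : Function.Injective i) (ho : Function.Injective o)
    (H : (X → ℝ) →ₗ[ℝ] (X → ℝ)) (hH : IsInfinitesimalStochastic H)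
    (i' : T → Y) (o' : U → Y) (hi' : Function.Injective i') (ho' : Function.Injective o')
    (G : (Y → ℝ) →ₗ[ℝ] (Y → ℝ)) (hG : IsInfinitesimalStochastic G)
    (j : X → Z) (k : Y → Z) (hpo : IsPushoutSquare o i' j k)
    (v : X → ℝ) (I : S → ℝ) (O : T → ℝ) (v' : Y → ℝ) (O' : U → ℝ)
    (hv : H v + pushforward i I - pushforward o O = 0)
    (hv' : G v' + pushforward i' O - pushforward o' O' = 0)
    (hagree : pullback o v = pullback i' v') :
    ∃ w : Z → ℝ, pullback j w = v ∧ pullback k w = v' ∧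
      (pushforward j ∘ₗ H ∘ₗ pullback j + pushforward k ∘ₗ G ∘ₗ pullback k) w
          + pushforward (j ∘ i) I - pushforward (k ∘ o') O' = 0 :=
  composite_steady_state_exists_general i o H i' o' G j k hpo v I O v' O' hv hv' hagree

end
end
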